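/- The only prefixes of the infinite Tribonacci word that are (integer) powers are those of length 2·T_n for n ≥ 5; i.e., the prefix T[0..m-1] can be written as x^k for some word x and integer k ≥ 2 if and only if m = 2T_n for some n ≥ 5. -/

import Mathlib

/-!
Write `φ` for the Tribonacci morphism and `s(e) = |φ(T[0..e))|`. Since `T = φ(T)`, the block
`φ(T[e])` of `T` starts at `s(e)`, every block starts with `0`, and `T[e]` is determined by
`T[s(e) + 1]`. So if a prefix of `T` has period `s(e)`, reading the letters `T[e + j]` off the
shifted blocks shows that a correspondingly shorter prefix has period `e` (desubstitution).
Descending along this, a prefix of length `2p - 1` with period `p` forces `p = T_n` (because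
`s(T_n) = T_{n+1}`), and no prefix of length `3p - 3` has a period `p ≥ 3`. Conversely `φ` maps the
square prefix of length `2T_n` onto that of length `2T_{n+1}`, starting from `n = 5`. Hence a power
prefix `x^k` has `|x| = T_n` with `n ≥ 5` (the periods `1, 2, 4` fail by inspection) and `k = 2`.
-/

/-- The Tribonacci morphism: 0 → 01, 1 → 02, 2 → 0. -/
def tribMap (c : ℕ) : List ℕ := if c = 0 then [0,1] else if c = 1 then [0,2] else [0]

/-- Iterates of the Tribonacci morphism on the word `0`. -/
def tribIter : ℕ → List ℕ
  | 0 => [0]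
  | k+1 => (tribIter k).flatMap tribMap

/-- The infinite Tribonacci word, the fixed point starting with 0 of 0→01, 1→02, 2→0. -/
def tribWord (n : ℕ) : ℕ := (tribIter (n+1)).getD n 0

/-- The Tribonacci numbers. -/
def trib : ℕ → ℕ
  | 0 => 0
  | 1 => 1
  | 2 => 1
  | n+3 => trib (n+2) + trib (n+1) + trib n

section Words

variable {α : Type*}

theorem map_range_add_self_eq_append_iff {f : ℕ → α} {t : ℕ} :
    (List.range (t + t)).map f = (List.range t).map f ++ (List.range t).map f ↔
      ∀ i < t, f (t + i) = f i := by
  rw [List.range_add, List.map_append, List.map_map, List.append_cancel_left_eq,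
    List.map_inj_left]
  simp only [List.mem_range, Function.comp_apply]

theorem period_of_map_range_eq_flatten_replicate {f : ℕ → α} {m k : ℕ} {x : List α}
    (h : (List.range m).map f = (List.replicate k x).flatten) :
    ∀ i < m - x.length, f (x.length + i) = f i := by
  rcases k with _ | k
  · obtain rfl : m = 0 := by simpa using h
    simp
  set F := (List.replicate k x).flatten
  have hxF : (List.replicate (k + 1) x).flatten = x ++ F := by simp [F, List.replicate_succ]
  have hFx : (List.replicate (k + 1) x).flatten = F ++ x := by simp [F, List.replicate_succ']
  have hm : m = x.length + F.length := by simpa [hxF] using congrArg List.length h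
  have hshift : (List.range F.length).map (fun i => f (x.length + i)) = F := by
    rw [hm, List.range_add, List.map_append, List.map_map, hxF] at h
    exact (List.append_inj h (by simp)).2
  have hprefix : (List.range F.length).map f = F := by
    rw [hm, add_comm, List.range_add, List.map_append, hFx] at h
    exact (List.append_inj h (by simp)).1
  intro i hi
  simpa using List.map_inj_left.mp (hshift.trans hprefix.symm) i (List.mem_range.mpr (by omega))

end Words

theorem exists_le_lt_succ_of_strictMono {f : ℕ → ℕ} (hf : StrictMono f) {p : ℕ} (h0 : f 0 ≤ p) :
    ∃ e, f e ≤ p ∧ p < f (e + 1) := by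
  have hex : ∃ e, p < f (e + 1) := ⟨p, (Nat.lt_succ_self p).trans_le hf.le_apply⟩
  refine ⟨Nat.find hex, ?_, Nat.find_spec hex⟩
  rcases h : Nat.find hex with _ | e
  · exact h0
  · simpa using Nat.find_min hex (h ▸ Nat.lt_succ_self e)

theorem trib_add_three (n : ℕ) : trib (n + 3) = trib (n + 2) + trib (n + 1) + trib n := rfl

theorem trib_monotone : Monotone trib := by
  refine monotone_nat_of_le_succ fun n => ?_
  rcases n with _ | _ | n
  · decide
  · decide
  · change trib (n + 2) ≤ trib (n + 3)
    rw [trib_add_three]; omega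

theorem succ_le_trib_add_two (n : ℕ) : n + 1 ≤ trib (n + 2) := by
  induction n with
  | zero => decide
  | succ n ih =>
    have : 1 ≤ trib (n + 1) := trib_monotone (show 1 ≤ n + 1 by omega)
    rw [trib_add_three]
    omega

theorem seven_le_trib {n : ℕ} (hn : 5 ≤ n) : 7 ≤ trib n := trib_monotone hn

theorem tribIter_add_three (k : ℕ) :
    tribIter (k + 3) = tribIter (k + 2) ++ tribIter (k + 1) ++ tribIter k := by
  induction k with
  | zero => decide
  | succ k ih =>
    change (tribIter (k + 3)).flatMap tribMap = (tribIter (k + 2)).flatMap tribMap ++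
      (tribIter (k + 1)).flatMap tribMap ++ (tribIter k).flatMap tribMap
    rw [ih, List.flatMap_append, List.flatMap_append]

theorem length_tribIter : ∀ k, (tribIter k).length = trib (k + 2)
  | 0 | 1 | 2 => rfl
  | k + 3 => by
    rw [tribIter_add_three, List.length_append, List.length_append, length_tribIter (k + 2),
      length_tribIter (k + 1), length_tribIter k]
    rfl

theorem tribIter_prefix_succ (k : ℕ) : tribIter k <+: tribIter (k + 1) := by
  induction k with
  | zero => exact ⟨[1], rfl⟩
  | succ k ih => exact ih.flatMap tribMap

theorem tribIter_prefix_of_le {k l : ℕ} (h : k ≤ l) : tribIter k <+: tribIter l := by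
  induction l, h using Nat.le_induction with
  | base => exact List.prefix_refl _
  | succ l _ ih => exact ih.trans (tribIter_prefix_succ l)

theorem le_two_of_mem_tribIter {a : ℕ} : ∀ {k}, a ∈ tribIter k → a ≤ 2
  | 0, h => by simp_all [tribIter]
  | k + 1, h => by
    obtain ⟨b, -, hb⟩ := List.mem_flatMap.mp h
    unfold tribMap at hb
    split_ifs at hb <;> simp only [List.mem_cons, List.not_mem_nil, or_false] at hb <;> omega

theorem lt_length_tribIter_succ (n : ℕ) : n < (tribIter (n + 1)).length := by
  have := succ_le_trib_add_two (n + 1)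
  rw [length_tribIter]; omega

theorem tribWord_eq_getElem {n K : ℕ} (h : n < (tribIter K).length) :
    tribWord n = (tribIter K)[n] := by
  have hn := lt_length_tribIter_succ n
  rw [tribWord, List.getD_eq_getElem _ _ hn]
  rcases le_total (n + 1) K with hK | hK
  · exact (tribIter_prefix_of_le hK).getElem hn
  · exact ((tribIter_prefix_of_le hK).getElem h).symm

theorem tribWord_eq_zero_or_eq_one_or_eq_two (n : ℕ) :
    tribWord n = 0 ∨ tribWord n = 1 ∨ tribWord n = 2 := by
  have hn := lt_length_tribIter_succ n
  have := le_two_of_mem_tribIter (tribWord_eq_getElem hn ▸ List.getElem_mem hn)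
  omega

def tribPrefix (a : ℕ) : List ℕ := (List.range a).map tribWord

/-- The position `s(e) = |φ(T[0..e))|` at which the block `φ(T[e])` of `T = φ(T)` starts. -/
def blockStart (e : ℕ) : ℕ := ((tribPrefix e).flatMap tribMap).length

@[simp] theorem length_tribPrefix (a : ℕ) : (tribPrefix a).length = a := by simp [tribPrefix]

theorem getElem?_tribPrefix {a i : ℕ} (h : i < a) : (tribPrefix a)[i]? = some (tribWord i) := by
  simp [tribPrefix, h]

theorem tribPrefix_succ (a : ℕ) : tribPrefix (a + 1) = tribPrefix a ++ [tribWord a] := by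
  simp [tribPrefix, List.range_succ]

theorem take_tribIter {a K : ℕ} (h : a ≤ (tribIter K).length) :
    (tribIter K).take a = tribPrefix a := by
  refine List.ext_getElem (by simp [h]) fun i h1 _ => ?_
  simp only [List.getElem_take, tribPrefix, List.getElem_map, List.getElem_range]
  exact (tribWord_eq_getElem (by simp at h1; omega)).symm

theorem eq_tribPrefix_of_prefix_tribIter {l : List ℕ} {K : ℕ} (h : l <+: tribIter K) :
    l = tribPrefix l.length :=
  (List.prefix_iff_eq_take.mp h).trans (take_tribIter h.length_le)

theorem flatMap_tribPrefix (a : ℕ) :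
    (tribPrefix a).flatMap tribMap = tribPrefix (blockStart a) := by
  have hpre : tribPrefix a <+: tribIter (a + 1) :=
    take_tribIter (lt_length_tribIter_succ a).le ▸ List.take_prefix _ _
  exact eq_tribPrefix_of_prefix_tribIter (K := a + 2) (hpre.flatMap tribMap)

theorem blockStart_trib (k : ℕ) : blockStart (trib (k + 2)) = trib (k + 3) := by
  have h := eq_tribPrefix_of_prefix_tribIter (List.prefix_refl (tribIter k))
  rw [length_tribIter] at h
  rw [blockStart, ← h, ← length_tribIter]
  rfl

theorem tribPrefix_blockStart_succ (e : ℕ) :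
    tribPrefix (blockStart (e + 1)) = tribPrefix (blockStart e) ++ tribMap (tribWord e) := by
  rw [← flatMap_tribPrefix, tribPrefix_succ, List.flatMap_append, flatMap_tribPrefix,
    List.flatMap_singleton]

theorem tribWord_blockStart_add {e j : ℕ} (h : j < (tribMap (tribWord e)).length) :
    some (tribWord (blockStart e + j)) = (tribMap (tribWord e))[j]? := by
  have hlen := congrArg List.length (tribPrefix_blockStart_succ e)
  simp only [length_tribPrefix, List.length_append] at hlen
  rw [← getElem?_tribPrefix (a := blockStart (e + 1)) (by omega), tribPrefix_blockStart_succ,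
    List.getElem?_append_right (by simp)]
  simp

theorem blockStart_succ (e : ℕ) :
    blockStart (e + 1) = blockStart e + if tribWord e = 2 then 1 else 2 := by
  have hlen := congrArg List.length (tribPrefix_blockStart_succ e)
  simp only [length_tribPrefix, List.length_append] at hlen
  rw [hlen]
  rcases tribWord_eq_zero_or_eq_one_or_eq_two e with h | h | h <;> simp [h, tribMap]

theorem tribWord_blockStart (e : ℕ) : tribWord (blockStart e) = 0 := by
  have h := tribWord_blockStart_add (e := e) (j := 0)
  rcases tribWord_eq_zero_or_eq_one_or_eq_two e with he | he | he <;> simpa [he, tribMap] using h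

theorem tribWord_blockStart_add_one {e : ℕ} (he : tribWord e ≠ 2) :
    tribWord (blockStart e + 1) = tribWord e + 1 := by
  have h := tribWord_blockStart_add (e := e) (j := 1)
  rcases tribWord_eq_zero_or_eq_one_or_eq_two e with he' | he' | he' <;> simp_all [tribMap]

/-- Recovers `c` from the second letter of `φ(c)` (for `c = 2`, the `0` opening the next block). -/
def decodeLetter (x : ℕ) : ℕ := if x = 0 then 2 else x - 1

theorem decodeLetter_tribWord_blockStart_add_one (e : ℕ) :
    decodeLetter (tribWord (blockStart e + 1)) = tribWord e := by
  by_cases he : tribWord e = 2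
  · have hs : blockStart e + 1 = blockStart (e + 1) := by simp [blockStart_succ, he]
    rw [hs, tribWord_blockStart, he]
    rfl
  · rw [tribWord_blockStart_add_one he, decodeLetter, if_neg (Nat.succ_ne_zero _)]
    rfl

theorem blockStart_zero : blockStart 0 = 0 := rfl

theorem blockStart_one : blockStart 1 = 2 := by decide

theorem blockStart_two : blockStart 2 = 4 := by decide

theorem blockStart_strictMono : StrictMono blockStart :=
  strictMono_nat_of_lt_succ fun e => by rw [blockStart_succ]; split_ifs <;> omega

theorem succ_le_blockStart {e : ℕ} (he : 1 ≤ e) : e + 1 ≤ blockStart e := by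
  have := blockStart_strictMono.add_le_nat (e - 1) 1
  rw [blockStart_one, Nat.sub_add_cancel he] at this
  omega

theorem eq_blockStart_add_one_of_lt {e p : ℕ} (h1 : blockStart e < p)
    (h2 : p < blockStart (e + 1)) : p = blockStart e + 1 ∧ tribWord e ≠ 2 := by
  rw [blockStart_succ] at h2
  split_ifs at h2 with he <;> omega

theorem exists_blockStart_eq_of_tribWord_eq_zero {p : ℕ} (h : tribWord p = 0) :
    ∃ e, blockStart e = p := by
  obtain ⟨e, hle, hlt⟩ := exists_le_lt_succ_of_strictMono blockStart_strictMono (Nat.zero_le p)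
  refine ⟨e, hle.eq_or_lt.resolve_right fun hgt => ?_⟩
  obtain ⟨rfl, he⟩ := eq_blockStart_add_one_of_lt hgt hlt
  rw [tribWord_blockStart_add_one he] at h
  omega

theorem tribWord_succ_eq_zero_of_eq_two {q : ℕ} (h : tribWord q = 2) : tribWord (q + 1) = 0 := by
  obtain ⟨e, hle, hlt⟩ := exists_le_lt_succ_of_strictMono blockStart_strictMono (Nat.zero_le q)
  obtain heq | hgt := hle.eq_or_lt
  · rw [← heq, tribWord_blockStart] at h
    omega
  · obtain ⟨rfl, he⟩ := eq_blockStart_add_one_of_lt hgt hlt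
    rw [tribWord_blockStart_add_one he] at h
    have hs : blockStart e + 1 + 1 = blockStart (e + 1) := by simp [blockStart_succ, he]
    rw [hs, tribWord_blockStart]

theorem blockStart_add_three_le (e : ℕ) : blockStart e + 3 ≤ blockStart (e + 2) := by
  have h1 := blockStart_succ e
  have h2 : blockStart (e + 2) = blockStart (e + 1) + if tribWord (e + 1) = 2 then 1 else 2 :=
    blockStart_succ (e + 1)
  by_cases he : tribWord e = 2
  · have : tribWord (e + 1) ≠ 2 := by rw [tribWord_succ_eq_zero_of_eq_two he]; omega
    simp only [he, this, if_true, if_false] at h1 h2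
    omega
  · simp only [he, if_false] at h1
    split_ifs at h2 <;> omega

theorem blockStart_add_and_tribWord_add_of_period {e r : ℕ}
    (H : ∀ i < r, tribWord (blockStart e + i) = tribWord i) {j : ℕ} (hj : blockStart j + 1 < r) :
    blockStart (e + j) = blockStart e + blockStart j ∧ tribWord (e + j) = tribWord j := by
  -- `T[e + j]` is read off at `blockStart (e + j) + 1`, where the period applies.
  have letter : ∀ j, blockStart j + 1 < r →
      blockStart (e + j) = blockStart e + blockStart j → tribWord (e + j) = tribWord j := by
    intro j hj hs
    rw [← decodeLetter_tribWord_blockStart_add_one, hs, add_assoc, H _ hj,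
      decodeLetter_tribWord_blockStart_add_one]
  induction j with
  | zero => exact ⟨rfl, letter 0 hj rfl⟩
  | succ j ih =>
    obtain ⟨hs, ht⟩ := ih (by have := blockStart_strictMono (lt_add_one j); omega)
    have hs' : blockStart (e + (j + 1)) = blockStart e + blockStart (j + 1) := by
      rw [← add_assoc, blockStart_succ, blockStart_succ j, hs, ht, add_assoc]
    exact ⟨hs', letter (j + 1) hj hs'⟩

theorem exists_blockStart_eq_of_period {m : ℕ} (hm : 2 ≤ m)
    (H : ∀ i < m - 1, tribWord (m + i) = tribWord i) :
    ∃ e, 1 ≤ e ∧ e < m ∧ blockStart e = m ∧ ∀ j < e - 1, tribWord (e + j) = tribWord j := by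
  obtain ⟨e, rfl⟩ := exists_blockStart_eq_of_tribWord_eq_zero ((H 0 (by omega)).trans (by decide))
  have he : 1 ≤ e := Nat.one_le_iff_ne_zero.mpr fun h => by simp [h, blockStart_zero] at hm
  refine ⟨e, he, by have := succ_le_blockStart he; omega, rfl, fun j hj => ?_⟩
  have := blockStart_add_three_le j
  have := blockStart_strictMono.monotone (show j + 2 ≤ e by omega)
  exact (blockStart_add_and_tribWord_add_of_period H (by omega)).2

theorem exists_eq_trib_of_period {m : ℕ} (hm : 1 ≤ m)
    (H : ∀ i < m - 1, tribWord (m + i) = tribWord i) : ∃ n ≥ 2, m = trib n := by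
  induction m using Nat.strong_induction_on with
  | _ m ih =>
    rcases lt_or_ge m 2 with h2 | h2
    · exact ⟨2, le_rfl, show m = 1 by omega⟩
    · obtain ⟨e, he, hem, rfl, He⟩ := exists_blockStart_eq_of_period h2 H
      obtain ⟨n, hn, rfl⟩ := ih e hem he He
      obtain ⟨k, rfl⟩ := Nat.exists_eq_add_of_le' hn
      exact ⟨k + 3, by omega, blockStart_trib k⟩

theorem not_period_of_three_le {m : ℕ} (hm : 3 ≤ m) :
    ¬ ∀ i < 2 * m - 3, tribWord (m + i) = tribWord i := by
  induction m using Nat.strong_induction_on with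
  | _ m ih =>
    intro H
    rcases lt_or_ge m 7 with h7 | h7
    · interval_cases m
      · exact absurd (H 0 (by omega)) (by decide)
      · exact absurd (H 3 (by omega)) (by decide)
      · exact absurd (H 0 (by omega)) (by decide)
      · exact absurd (H 1 (by omega)) (by decide)
    · obtain ⟨e, -, hem, rfl, -⟩ :=
        exists_blockStart_eq_of_period (by omega) fun i hi => H i (by omega)
      have he : 3 ≤ e := by
        by_contra! he
        have := blockStart_strictMono.monotone (show e ≤ 2 by omega)
        rw [blockStart_two] at this
        omega
      refine ih e hem he fun j hj => ?_
      rcases le_or_gt j e with hje | hje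
      · have := blockStart_strictMono.monotone hje
        exact (blockStart_add_and_tribWord_add_of_period H (by omega)).2
      · -- `blockStart (e + k) = m + blockStart k ≤ 2m - 6`, still inside the period.
        obtain ⟨k, rfl⟩ : ∃ k, j = e + k := ⟨j - e, by omega⟩
        have h1 := blockStart_add_three_le k
        have h2 : blockStart (k + 2) + 3 ≤ blockStart (k + 4) := blockStart_add_three_le (k + 2)
        have h3 := blockStart_strictMono.monotone (show k + 4 ≤ e by omega)
        have hsum := (blockStart_add_and_tribWord_add_of_period H (j := k) (by omega)).1
        exact (blockStart_add_and_tribWord_add_of_period H (by omega)).2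

theorem period_blockStart_of_square {t : ℕ} (h : ∀ i < t, tribWord (t + i) = tribWord i) :
    ∀ i < blockStart t, tribWord (blockStart t + i) = tribWord i := by
  have hsq : tribPrefix (t + t) = tribPrefix t ++ tribPrefix t :=
    map_range_add_self_eq_append_iff.mpr h
  have himg : tribPrefix (blockStart (t + t)) =
      tribPrefix (blockStart t) ++ tribPrefix (blockStart t) := by
    rw [← flatMap_tribPrefix, hsq, List.flatMap_append, flatMap_tribPrefix]
  have hlen : blockStart (t + t) = blockStart t + blockStart t := by
    simpa using congrArg List.length himg
  rw [hlen] at himg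
  exact map_range_add_self_eq_append_iff.mp himg

theorem period_trib_of_five_le {n : ℕ} (hn : 5 ≤ n) :
    ∀ i < trib n, tribWord (trib n + i) = tribWord i := by
  induction n, hn using Nat.le_induction with
  | base => decide
  | succ n hn ih =>
    obtain ⟨k, rfl⟩ := Nat.exists_eq_add_of_le' (show 2 ≤ n by omega)
    simpa only [blockStart_trib] using period_blockStart_of_square ih

theorem exists_eq_trib_of_square {d : ℕ} (hd : 1 ≤ d)
    (H : ∀ i < d, tribWord (d + i) = tribWord i) : ∃ n ≥ 5, d = trib n := by
  obtain ⟨n, hn, rfl⟩ := exists_eq_trib_of_period hd fun i _ => H i (by omega)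
  refine ⟨n, ?_, rfl⟩
  by_contra! hn5
  interval_cases n
  · exact absurd (H 0 (by decide)) (by decide)
  · exact absurd (H 1 (by decide)) (by decide)
  · exact absurd (H 3 (by decide)) (by decide)

/-- The prefixes of the Tribonacci word that are integer powers are exactly those of
length `2·T_n` for `n ≥ 5`. -/
theorem tribWord_prefix_powers (m : ℕ) :
    (∃ (x : List ℕ) (k : ℕ), x ≠ [] ∧ 2 ≤ k ∧
        (List.range m).map tribWord = (List.replicate k x).flatten) ↔
      ∃ n ≥ 5, m = 2 * trib n := by
  constructor
  · rintro ⟨x, k, hx, hk, h⟩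
    have hm : m = k * x.length := by simpa using congrArg List.length h
    have hper := period_of_map_range_eq_flatten_replicate h
    have hd : 1 ≤ x.length := List.length_pos_iff.mpr hx
    have h2d : 2 * x.length ≤ m := hm ▸ Nat.mul_le_mul_right _ hk
    obtain ⟨n, hn, hdn⟩ := exists_eq_trib_of_square hd fun i hi => hper i (by omega)
    have hk2 : k = 2 := by
      by_contra hk2
      have h3d : 3 * x.length ≤ m := hm ▸ Nat.mul_le_mul_right _ (by omega)
      have h7 := seven_le_trib hn
      exact not_period_of_three_le (m := x.length) (by omega) fun i hi => hper i (by omega)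
    exact ⟨n, hn, by rw [hm, hk2, hdn]⟩
  · rintro ⟨n, hn, rfl⟩
    refine ⟨tribPrefix (trib n), 2, ?_, le_rfl, ?_⟩
    · rw [← List.length_pos_iff, length_tribPrefix]
      have := seven_le_trib hn
      omega
    · rw [two_mul, map_range_add_self_eq_append_iff.mpr (period_trib_of_five_le hn)]
      simp [tribPrefix, List.replicate]
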